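/- arXiv:2007.10012 — 2 statements merged into one kernel-verified Lean document; each statement's English description precedes it below -/
import Mathlib

section
/- In the abstract discrete Biot setting with error sequences, there is a constant C > 0 depending only on γ_a, C_a and β_S (independent of κ, c₀, τ and N) such that for every 1 ≤ m ≤ N: (τ/κ)^{1/2}·‖e_z^m‖_{W0} ≤ C·( (τ/κ)^{1/2}·‖e_z^0‖_{W0} + τ^{1/2}·Σ_{j=1}^{N} κ^{−1/2}·‖ρ_z^j − ρ_z^{j−1}‖_{W0} + Σ_{j=1}^{N} τ·‖R^j‖_Q ). -/
/-!
Subtracting the equations at consecutive time levels and testing the Darcy equation with `e_z^m`,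
the mass balance with the pressure increment `δp` and the elasticity equation with the
displacement increment `δu` gives an energy identity. By inf-sup stability the elasticity
equation bounds `βS ‖δp‖ ≤ Ca ‖δu‖`, so Young's inequality absorbs the load term `⟪R^m, δp⟫` into
the coercivity term `τ⁻¹ a(δu, δu)` up to `K τ ‖R^m‖²` with `K = (Ca / βS)² / (4 γa)`. What
remains is `‖e_z^m‖² ≤ (‖e_z^{m-1}‖ + ‖δρ_z^m‖) ‖e_z^m‖ + κ τ K ‖R^m‖²`, hence the linear recursion
`‖e_z^m‖ ≤ ‖e_z^{m-1}‖ + ‖δρ_z^m‖ + √(κ τ K) ‖R^m‖`, which telescopes; multiplying by `√(τ / κ)`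
gives the estimate with `C = 1 + √K`.
-/

open scoped RealInnerProductSpace
open Finset

theorem le_of_le_iSup_div_norm {E : Type*} [NormedAddCommGroup E] {f : E → ℝ} {c M : ℝ}
    (hM : 0 ≤ M) (hc : c ≤ ⨆ v : {v : E // v ≠ 0}, f v / ‖(v : E)‖)
    (hf : ∀ v, f v ≤ M * ‖v‖) : c ≤ M := by
  rcases isEmpty_or_nonempty {v : E // v ≠ 0} with h | h
  · rw [Real.iSup_of_isEmpty] at hc
    linarith
  · refine hc.trans (ciSup_le fun v => ?_)
    rw [div_le_iff₀ (norm_pos_iff.mpr v.2)]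
    exact hf v

theorem mul_mul_le_div_mul_sq_add {γ τ : ℝ} (hγ : 0 < γ) (hτ : 0 < τ) (c r x : ℝ) :
    c * r * x ≤ γ / τ * x ^ 2 + c ^ 2 / (4 * γ) * τ * r ^ 2 := by
  have hsq : γ / τ * x ^ 2 + c ^ 2 / (4 * γ) * τ * r ^ 2 - c * r * x
      = γ / τ * (x - τ * c * r / (2 * γ)) ^ 2 := by
    field_simp
    ring
  nlinarith [mul_nonneg (div_pos hγ hτ).le (sq_nonneg (x - τ * c * r / (2 * γ)))]

theorem le_add_of_sq_le_mul_add_sq {x y c : ℝ} (hy : 0 ≤ y) (hc : 0 ≤ c)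
    (h : x ^ 2 ≤ y * x + c ^ 2) : x ≤ y + c := by
  by_contra! hlt
  nlinarith [mul_nonneg hc (by linarith : 0 ≤ x - c)]

theorem le_add_sum_Icc_of_le_add {x d : ℕ → ℝ} {N : ℕ} (hd : ∀ j ∈ Icc 1 N, 0 ≤ d j)
    (h : ∀ j ∈ Icc 1 N, x j ≤ x (j - 1) + d j) {m : ℕ} (hm : m ≤ N) :
    x m ≤ x 0 + ∑ j ∈ Icc 1 N, d j := by
  have hprefix : ∀ n ≤ N, x n ≤ x 0 + ∑ j ∈ Icc 1 n, d j := by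
    intro n
    induction n with
    | zero => simp
    | succ n ih =>
      intro hn
      rw [sum_Icc_succ_top (Nat.le_add_left 1 n)]
      have hn1 := h (n + 1) (mem_Icc.mpr ⟨Nat.le_add_left 1 n, hn⟩)
      rw [Nat.add_sub_cancel] at hn1
      linarith [ih (by omega)]
  calc x m ≤ x 0 + ∑ j ∈ Icc 1 m, d j := hprefix m hm
    _ ≤ x 0 + ∑ j ∈ Icc 1 N, d j := by
      gcongr
      exact fun j hj _ => hd j hj

theorem sqrt_div_mul_le_of_le_add_sum {τ κ K x x₀ : ℝ} {d r : ℕ → ℝ} {s : Finset ℕ}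
    (hτ : 0 < τ) (hκ : 0 < κ) (hK : 0 ≤ K) (hx₀ : 0 ≤ x₀) (hd : ∀ j ∈ s, 0 ≤ d j)
    (hr : ∀ j ∈ s, 0 ≤ r j) (h : x ≤ x₀ + ∑ j ∈ s, (d j + √(κ * τ * K) * r j)) :
    √(τ / κ) * x ≤
      (1 + √K) * (√(τ / κ) * x₀ + √τ * ∑ j ∈ s, (√κ)⁻¹ * d j + ∑ j ∈ s, τ * r j) := by
  have hweight : ∀ j, √(τ / κ) * (d j + √(κ * τ * K) * r j)
      = √τ * ((√κ)⁻¹ * d j) + √K * (τ * r j) := by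
    intro j
    have hκs : √κ ≠ 0 := (Real.sqrt_pos.mpr hκ).ne'
    rw [Real.sqrt_div' _ hκ.le, Real.sqrt_mul' _ hK, Real.sqrt_mul hκ.le]
    field_simp
    linear_combination √κ * √K * r j * Real.mul_self_sqrt hτ.le
  have hA : 0 ≤ √(τ / κ) * x₀ := by positivity
  have hB : 0 ≤ √τ * ∑ j ∈ s, (√κ)⁻¹ * d j :=
    mul_nonneg (Real.sqrt_nonneg τ) (sum_nonneg fun j hj => by have := hd j hj; positivity)
  have hD : 0 ≤ ∑ j ∈ s, τ * r j := sum_nonneg fun j hj => by have := hr j hj; positivity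
  calc √(τ / κ) * x ≤ √(τ / κ) * (x₀ + ∑ j ∈ s, (d j + √(κ * τ * K) * r j)) := by gcongr
    _ = √(τ / κ) * x₀ + √τ * ∑ j ∈ s, (√κ)⁻¹ * d j + √K * ∑ j ∈ s, τ * r j := by
      rw [mul_add, mul_sum, sum_congr rfl fun j _ => hweight j, sum_add_distrib, mul_sum,
        mul_sum, add_assoc]
    _ ≤ (1 + √K) * (√(τ / κ) * x₀ + √τ * ∑ j ∈ s, (√κ)⁻¹ * d j + ∑ j ∈ s, τ * r j) := by
      nlinarith [mul_nonneg (Real.sqrt_nonneg K) (add_nonneg hA hB)]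

section Biot

variable {U W Q : Type*}
  [NormedAddCommGroup U] [InnerProductSpace ℝ U]
  [NormedAddCommGroup W] [InnerProductSpace ℝ W]
  [NormedAddCommGroup Q] [InnerProductSpace ℝ Q]
  (a : U →ₗ[ℝ] U →ₗ[ℝ] ℝ) (DU : U →ₗ[ℝ] Q) (DW : W →ₗ[ℝ] Q)

theorem mul_norm_le_of_inf_sup {Ca βS : ℝ} (hCa : 0 ≤ Ca)
    (habs : ∀ u v : U, |a u v| ≤ Ca * ‖u‖ * ‖v‖) {u : U} {p : Q}
    (hinf : βS * ‖p‖ ≤ ⨆ v : {v : U // v ≠ 0}, ⟪DU (v : U), p⟫ / ‖(v : U)‖)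
    (hel : ∀ v, a u v + ⟪DU v, p⟫ = 0) :
    βS * ‖p‖ ≤ Ca * ‖u‖ :=
  le_of_le_iSup_div_norm (by positivity) hinf fun v =>
    calc ⟪DU v, p⟫ = -a u v := by linarith [hel v]
      _ ≤ |a u v| := neg_le_abs _
      _ ≤ Ca * ‖u‖ * ‖v‖ := habs u v

theorem biot_energy_identity {τ κ c₀ : ℝ} {δu : U} {δp R : Q} {z₀ z₁ δρ : W}
    (hel : ∀ v, a δu v + ⟪DU v, δp⟫ = 0)
    (hdarcy : ∀ w, κ⁻¹ * ⟪z₁ - z₀, w⟫ + ⟪DW w, δp⟫ = κ⁻¹ * ⟪δρ, w⟫)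
    (hmass : ∀ q, ⟪DU (τ⁻¹ • δu), q⟫ + ⟪DW z₁, q⟫ - c₀ * ⟪τ⁻¹ • δp, q⟫ = ⟪R, q⟫) :
    κ⁻¹ * ‖z₁‖ ^ 2 + τ⁻¹ * a δu δu + c₀ * τ⁻¹ * ‖δp‖ ^ 2
      = κ⁻¹ * ⟪z₀, z₁⟫ + κ⁻¹ * ⟪δρ, z₁⟫ - ⟪R, δp⟫ := by
  have hu := hel δu
  have hz := hdarcy z₁
  have hp := hmass δp
  rw [map_smul, real_inner_smul_left, real_inner_smul_left, real_inner_self_eq_norm_sq] at hp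
  rw [inner_sub_left, real_inner_self_eq_norm_sq] at hz
  linear_combination hz - hp + τ⁻¹ * hu

theorem biot_norm_flux_sq_le {γa Ca βS τ κ c₀ : ℝ} (hγa : 0 < γa) (hCa : 0 ≤ Ca)
    (hβS : 0 < βS) (hτ : 0 < τ) (hκ : 0 < κ) (hc₀ : 0 ≤ c₀)
    (hcoer : ∀ u : U, γa * ‖u‖ ^ 2 ≤ a u u)
    (habs : ∀ u v : U, |a u v| ≤ Ca * ‖u‖ * ‖v‖)
    (hinf : ∀ q : Q, βS * ‖q‖ ≤ ⨆ v : {v : U // v ≠ 0}, ⟪DU (v : U), q⟫ / ‖(v : U)‖)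
    {δu : U} {δp R : Q} {z₀ z₁ δρ : W}
    (hel : ∀ v, a δu v + ⟪DU v, δp⟫ = 0)
    (hdarcy : ∀ w, κ⁻¹ * ⟪z₁ - z₀, w⟫ + ⟪DW w, δp⟫ = κ⁻¹ * ⟪δρ, w⟫)
    (hmass : ∀ q, ⟪DU (τ⁻¹ • δu), q⟫ + ⟪DW z₁, q⟫ - c₀ * ⟪τ⁻¹ • δp, q⟫ = ⟪R, q⟫) :
    ‖z₁‖ ^ 2 ≤ (‖z₀‖ + ‖δρ‖) * ‖z₁‖ + κ * τ * ((Ca / βS) ^ 2 / (4 * γa)) * ‖R‖ ^ 2 := by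
  set K := (Ca / βS) ^ 2 / (4 * γa)
  have henergy := biot_energy_identity a DU DW hel hdarcy hmass
  have hpressure : ‖δp‖ ≤ Ca / βS * ‖δu‖ := by
    rw [div_mul_eq_mul_div, le_div_iff₀ hβS, mul_comm]
    exact mul_norm_le_of_inf_sup a DU hCa habs (hinf δp) hel
  have hload : -⟪R, δp⟫ ≤ γa / τ * ‖δu‖ ^ 2 + K * τ * ‖R‖ ^ 2 :=
    calc -⟪R, δp⟫ ≤ ‖R‖ * ‖δp‖ := (neg_le_abs _).trans (abs_real_inner_le_norm _ _)
      _ ≤ ‖R‖ * (Ca / βS * ‖δu‖) := by gcongr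
      _ = Ca / βS * ‖R‖ * ‖δu‖ := by ring
      _ ≤ γa / τ * ‖δu‖ ^ 2 + K * τ * ‖R‖ ^ 2 := mul_mul_le_div_mul_sq_add hγa hτ _ _ _
  have hcoer' : γa / τ * ‖δu‖ ^ 2 ≤ τ⁻¹ * a δu δu := by
    rw [div_eq_inv_mul, mul_assoc]
    exact mul_le_mul_of_nonneg_left (hcoer δu) (by positivity)
  have hstorage : 0 ≤ c₀ * τ⁻¹ * ‖δp‖ ^ 2 := by positivity
  have hz := mul_le_mul_of_nonneg_left (real_inner_le_norm z₀ z₁) (inv_nonneg.mpr hκ.le)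
  have hρ := mul_le_mul_of_nonneg_left (real_inner_le_norm δρ z₁) (inv_nonneg.mpr hκ.le)
  have hbound : κ⁻¹ * ‖z₁‖ ^ 2 ≤ κ⁻¹ * ((‖z₀‖ + ‖δρ‖) * ‖z₁‖) + K * τ * ‖R‖ ^ 2 := by
    linarith
  calc ‖z₁‖ ^ 2 = κ * (κ⁻¹ * ‖z₁‖ ^ 2) := by field_simp
    _ ≤ κ * (κ⁻¹ * ((‖z₀‖ + ‖δρ‖) * ‖z₁‖) + K * τ * ‖R‖ ^ 2) := by gcongr
    _ = (‖z₀‖ + ‖δρ‖) * ‖z₁‖ + κ * τ * K * ‖R‖ ^ 2 := by field_simp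

theorem biot_norm_flux_le_of_step {γa Ca βS τ κ c₀ : ℝ} (hγa : 0 < γa) (hCa : 0 ≤ Ca)
    (hβS : 0 < βS) (hτ : 0 < τ) (hκ : 0 < κ) (hc₀ : 0 ≤ c₀)
    (hcoer : ∀ u : U, γa * ‖u‖ ^ 2 ≤ a u u)
    (habs : ∀ u v : U, |a u v| ≤ Ca * ‖u‖ * ‖v‖)
    (hinf : ∀ q : Q, βS * ‖q‖ ≤ ⨆ v : {v : U // v ≠ 0}, ⟪DU (v : U), q⟫ / ‖(v : U)‖)
    {u₀ u₁ : U} {p₀ p₁ R : Q} {z₀ z₁ ρ₀ ρ₁ : W}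
    (hel₀ : ∀ v, a u₀ v + ⟪DU v, p₀⟫ = 0) (hel₁ : ∀ v, a u₁ v + ⟪DU v, p₁⟫ = 0)
    (hdarcy₀ : ∀ w, κ⁻¹ * ⟪z₀, w⟫ + ⟪DW w, p₀⟫ = κ⁻¹ * ⟪ρ₀, w⟫)
    (hdarcy₁ : ∀ w, κ⁻¹ * ⟪z₁, w⟫ + ⟪DW w, p₁⟫ = κ⁻¹ * ⟪ρ₁, w⟫)
    (hmass : ∀ q, ⟪DU (τ⁻¹ • (u₁ - u₀)), q⟫ + ⟪DW z₁, q⟫ - c₀ * ⟪τ⁻¹ • (p₁ - p₀), q⟫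
      = ⟪R, q⟫) :
    ‖z₁‖ ≤ ‖z₀‖ + ‖ρ₁ - ρ₀‖ + √(κ * τ * ((Ca / βS) ^ 2 / (4 * γa))) * ‖R‖ := by
  have hel : ∀ v, a (u₁ - u₀) v + ⟪DU v, p₁ - p₀⟫ = 0 := fun v => by
    simp only [map_sub, LinearMap.sub_apply, inner_sub_right]
    linarith [hel₀ v, hel₁ v]
  have hdarcy : ∀ w, κ⁻¹ * ⟪z₁ - z₀, w⟫ + ⟪DW w, p₁ - p₀⟫ = κ⁻¹ * ⟪ρ₁ - ρ₀, w⟫ := fun w => by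
    simp only [inner_sub_left, inner_sub_right]
    linarith [hdarcy₀ w, hdarcy₁ w]
  have hsq := biot_norm_flux_sq_le a DU DW hγa hCa hβS hτ hκ hc₀ hcoer habs hinf hel hdarcy hmass
  refine le_add_of_sq_le_mul_add_sq (by positivity) (by positivity) ?_
  rwa [mul_pow, Real.sq_sqrt (by positivity)]

end Biot

theorem biot_flux_error_estimate_general {U W Q : Type*}
    [NormedAddCommGroup U] [InnerProductSpace ℝ U]
    [NormedAddCommGroup W] [InnerProductSpace ℝ W]
    [NormedAddCommGroup Q] [InnerProductSpace ℝ Q]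
    (γa Ca βS : ℝ) (hγa : 0 < γa) (hCa : 0 < Ca) (hβS : 0 < βS) :
    ∃ C : ℝ, 0 < C ∧
      ∀ (τ κ c₀ Cb : ℝ), 0 < τ → 0 < κ → κ ≤ 1 → 0 ≤ c₀ → c₀ < 1 → 0 < Cb →
      ∀ (a : U →ₗ[ℝ] U →ₗ[ℝ] ℝ) (DU : U →ₗ[ℝ] Q) (DW : W →ₗ[ℝ] Q),
        (∀ u v : U, a u v = a v u) →
        (∀ u : U, γa * ‖u‖ ^ 2 ≤ a u u) →
        (∀ u v : U, |a u v| ≤ Ca * ‖u‖ * ‖v‖) →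
        (∀ v : U, ‖DU v‖ ≤ Cb * ‖v‖) →
        (∀ q : Q, βS * ‖q‖ ≤ ⨆ v : {v : U // v ≠ 0}, ⟪DU (v : U), q⟫ / ‖(v : U)‖) →
      ∀ (N : ℕ), 1 ≤ N →
      ∀ (eu : ℕ → U) (ez : ℕ → W) (ep : ℕ → Q) (ρz : ℕ → W) (R : ℕ → Q),
        (∀ m ≤ N, ∀ v : U, a (eu m) v + ⟪DU v, ep m⟫ = 0) →
        (∀ m ≤ N, ∀ w : W, κ⁻¹ * ⟪ez m, w⟫ + ⟪DW w, ep m⟫ = κ⁻¹ * ⟪ρz m, w⟫) →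
        (∀ m, 1 ≤ m → m ≤ N → ∀ q : Q,
          ⟪DU (τ⁻¹ • (eu m - eu (m - 1))), q⟫ + ⟪DW (ez m), q⟫
            - c₀ * ⟪τ⁻¹ • (ep m - ep (m - 1)), q⟫ = ⟪R m, q⟫) →
      ∀ m, 1 ≤ m → m ≤ N →
        Real.sqrt (τ / κ) * ‖ez m‖ ≤
          C * (Real.sqrt (τ / κ) * ‖ez 0‖
            + Real.sqrt τ * ∑ j ∈ Icc 1 N, (Real.sqrt κ)⁻¹ * ‖ρz j - ρz (j - 1)‖
            + ∑ j ∈ Icc 1 N, τ * ‖R j‖) := by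
  set K := (Ca / βS) ^ 2 / (4 * γa)
  refine ⟨1 + √K, by positivity, ?_⟩
  intro τ κ c₀ _ hτ hκ _ hc₀ _ _ a DU DW _ hcoer habs _ hinf N _ eu ez ep ρz R hel hdarcy hmass
    m _ hmN
  have hstep : ∀ j ∈ Icc 1 N,
      ‖ez j‖ ≤ ‖ez (j - 1)‖ + (‖ρz j - ρz (j - 1)‖ + √(κ * τ * K) * ‖R j‖) := by
    intro j hj
    obtain ⟨hj1, hjN⟩ := mem_Icc.mp hj
    rw [← add_assoc]
    exact biot_norm_flux_le_of_step a DU DW hγa hCa.le hβS hτ hκ hc₀ hcoer habs hinf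
      (hel (j - 1) (by omega)) (hel j hjN) (hdarcy (j - 1) (by omega)) (hdarcy j hjN)
      (hmass j hj1 hjN)
  have hsum := le_add_sum_Icc_of_le_add (fun j _ => by positivity) hstep hmN
  exact sqrt_div_mul_le_of_le_add_sum hτ hκ (by positivity) (norm_nonneg _)
    (fun j _ => norm_nonneg _) (fun j _ => norm_nonneg _) hsum

/-- Flux error estimate in the weighted `L²` part of the flux norm for minimally
Stokes–Biot stable Euler–Galerkin schemes: there is `C > 0` depending only on
`γ_a, C_a, β_S` (independent of `κ, c₀, τ, N`) such that for `1 ≤ m ≤ N`,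
`(τ/κ)^{1/2}‖e_z^m‖ ≤ C((τ/κ)^{1/2}‖e_z^0‖ + τ^{1/2}Σ_j κ^{−1/2}‖ρ_z^j − ρ_z^{j−1}‖ +
Σ_j τ‖R^j‖)`. -/
theorem biot_flux_error_estimate {U W Q : Type*}
    [NormedAddCommGroup U] [InnerProductSpace ℝ U] [FiniteDimensional ℝ U]
    [NormedAddCommGroup W] [InnerProductSpace ℝ W] [FiniteDimensional ℝ W]
    [NormedAddCommGroup Q] [InnerProductSpace ℝ Q] [FiniteDimensional ℝ Q]
    (γa Ca βS : ℝ) (hγa : 0 < γa) (hCa : 0 < Ca) (hβS : 0 < βS) :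
    ∃ C : ℝ, 0 < C ∧
      ∀ (τ κ c₀ Cb : ℝ), 0 < τ → 0 < κ → κ ≤ 1 → 0 ≤ c₀ → c₀ < 1 → 0 < Cb →
      ∀ (a : U →ₗ[ℝ] U →ₗ[ℝ] ℝ) (DU : U →ₗ[ℝ] Q) (DW : W →ₗ[ℝ] Q),
        (∀ u v : U, a u v = a v u) →
        (∀ u : U, γa * ‖u‖ ^ 2 ≤ a u u) →
        (∀ u v : U, |a u v| ≤ Ca * ‖u‖ * ‖v‖) →
        (∀ v : U, ‖DU v‖ ≤ Cb * ‖v‖) →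
        (∀ q : Q, βS * ‖q‖ ≤ ⨆ v : {v : U // v ≠ 0}, ⟪DU (v : U), q⟫ / ‖(v : U)‖) →
      ∀ (N : ℕ), 1 ≤ N →
      ∀ (eu : ℕ → U) (ez : ℕ → W) (ep : ℕ → Q) (ρz : ℕ → W) (R : ℕ → Q),
        (∀ m ≤ N, ∀ v : U, a (eu m) v + ⟪DU v, ep m⟫ = 0) →
        (∀ m ≤ N, ∀ w : W, κ⁻¹ * ⟪ez m, w⟫ + ⟪DW w, ep m⟫ = κ⁻¹ * ⟪ρz m, w⟫) →
        (∀ m, 1 ≤ m → m ≤ N → ∀ q : Q,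
          ⟪DU (τ⁻¹ • (eu m - eu (m - 1))), q⟫ + ⟪DW (ez m), q⟫
            - c₀ * ⟪τ⁻¹ • (ep m - ep (m - 1)), q⟫ = ⟪R m, q⟫) →
      ∀ m, 1 ≤ m → m ≤ N →
        Real.sqrt (τ / κ) * ‖ez m‖ ≤
          C * (Real.sqrt (τ / κ) * ‖ez 0‖
            + Real.sqrt τ * ∑ j ∈ Icc 1 N, (Real.sqrt κ)⁻¹ * ‖ρz j - ρz (j - 1)‖
            + ∑ j ∈ Icc 1 N, τ * ‖R j‖) :=
  biot_flux_error_estimate_general γa Ca βS hγa hCa hβS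
end

section
/- In the abstract discrete Biot setting with error sequences, there is a constant C > 0 depending only on γ_a, C_a, C_b and β_S (independent of κ, c₀, τ and N) such that for every 1 ≤ m ≤ N: ‖e_u^m‖_U + ‖e_p^m‖_Q + |||e_z^m||| ≤ C·( ‖e_u^0‖_U + c₀^{1/2}·‖e_p^0‖_Q + (τ/κ)^{1/2}·‖e_z^0‖_{W0} + (Σ_{j=1}^{N} (τ/κ)·‖ρ_z^j‖_{W0}²)^{1/2} + τ^{1/2}·Σ_{j=1}^{N} κ^{−1/2}·‖ρ_z^j − ρ_z^{j−1}‖_{W0} + Σ_{j=1}^{N} τ·‖R^j‖_Q ), where |||z|||² = (τ/κ)‖z‖_{W0}² + τ²‖D_W z‖_Q². -/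
/-!
Energy argument, with `δx^n = x^n - x^{n-1}`. Testing the three error equations with
`(δe_u^n, τ e_z^n, e_p^n)` and summing telescopes into a bound for
`a(e_u^n, e_u^n) + c₀‖e_p^n‖² + ∑ (τ/κ)‖e_z^j‖²` in which the residual enters through
`τ⟪R^j, e_p^j⟫`.
The inf-sup condition gives `‖e_p‖ ≤ (C_a/β_S)‖e_u‖`, so at the index where `‖e_u^n‖` is largest
the estimate becomes a quadratic inequality for `max ‖e_u^n‖`. Testing the differenced equations
with `(δe_u^n, τ e_z^n, δe_p^n)` bounds `δe_u^n` in the same way, and the mass balance then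
expresses `τ D_W e_z^n` through `R^n`, `D_U δe_u^n` and `c₀ δe_p^n`.
-/

open scoped RealInnerProductSpace
open Finset

theorem sum_Icc_one_sub_pred {M : Type*} [AddCommGroup M] (f : ℕ → M) (n : ℕ) :
    ∑ j ∈ Icc 1 n, (f j - f (j - 1)) = f n - f 0 := by
  induction n with
  | zero => simp
  | succ n ih => rw [sum_Icc_succ_top (by omega), ih, Nat.add_sub_cancel, sub_add_sub_cancel']

theorem LinearMap.apply_self_sub_apply_self_le {E : Type*} [AddCommGroup E] [Module ℝ E]
    {a : E →ₗ[ℝ] E →ₗ[ℝ] ℝ} (hsym : ∀ u v, a u v = a v u) (hpos : ∀ v, 0 ≤ a v v) (x y : E) :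
    a x x - a y y ≤ 2 * a x (x - y) := by
  have h := hpos (x - y)
  simp only [map_sub, LinearMap.sub_apply] at h ⊢
  linarith [hsym x y]

theorem norm_sq_sub_norm_sq_le_two_mul_inner {E : Type*} [NormedAddCommGroup E]
    [InnerProductSpace ℝ E] (x y : E) : ‖x‖ ^ 2 - ‖y‖ ^ 2 ≤ 2 * ⟪x - y, x⟫ := by
  rw [inner_sub_left, real_inner_self_eq_norm_sq, real_inner_comm]
  nlinarith [norm_sub_sq_real x y, sq_nonneg ‖x - y‖]

theorem le_mul_of_sq_le_add {γ A B S x : ℝ} (hγ : 0 < γ) (hA : 0 ≤ A) (hB : 0 ≤ B) (hS : 0 ≤ S)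
    (h : γ * x ^ 2 ≤ A * S ^ 2 + B * S * x) : x ≤ (B / γ + √(A / γ)) * S := by
  set r := √(A / γ)
  have hr : γ * r ^ 2 = A := by rw [Real.sq_sqrt (by positivity)]; field_simp
  by_contra! hlt
  have hx : 0 < x := lt_of_le_of_lt (by positivity) hlt
  have hrx : r * S ≤ x :=
    (mul_le_mul_of_nonneg_right (le_add_of_nonneg_left (by positivity)) hS).trans hlt.le
  have h1 : γ * x * ((B / γ + r) * S) < γ * x * x := mul_lt_mul_of_pos_left hlt (by positivity)
  have h2 : γ * r * S * (r * S) ≤ γ * r * S * x := mul_le_mul_of_nonneg_left hrx (by positivity)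
  have h3 : γ * x * ((B / γ + r) * S) = B * S * x + γ * r * S * x := by field_simp
  rw [← hr] at h
  linarith

theorem le_sqrt_mul_of_sq_le {K S x : ℝ} (hS : 0 ≤ S) (hx : 0 ≤ x) (h : x ^ 2 ≤ K * S ^ 2) :
    x ≤ √K * S :=
  calc x = √(x ^ 2) := (Real.sqrt_sq hx).symm
    _ ≤ √(K * S ^ 2) := Real.sqrt_le_sqrt h
    _ = √K * S := by rw [Real.sqrt_mul' _ (sq_nonneg S), Real.sqrt_sq hS]

theorem norm_le_div_of_infSup {U Q : Type*} [NormedAddCommGroup U] [NormedAddCommGroup Q]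
    [InnerProductSpace ℝ Q] {D : U → Q} {β M : ℝ} {p : Q} (hβ : 0 < β) (hM : 0 ≤ M)
    (hinf : β * ‖p‖ ≤ ⨆ v : {v : U // v ≠ 0}, ⟪D v, p⟫ / ‖(v : U)‖)
    (h : ∀ v, ⟪D v, p⟫ ≤ M * ‖v‖) : ‖p‖ ≤ M / β := by
  rw [le_div_iff₀ hβ, mul_comm]
  refine hinf.trans (Real.iSup_le (fun v => ?_) hM)
  exact div_le_of_le_mul₀ (norm_nonneg _) hM (h v)

def IsPressureBound {U Q : Type*} [NormedAddCommGroup U] [NormedSpace ℝ U]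
    [NormedAddCommGroup Q] [InnerProductSpace ℝ Q] (a : U →ₗ[ℝ] U →ₗ[ℝ] ℝ) (DU : U →ₗ[ℝ] Q)
    (cp : ℝ) : Prop :=
  ∀ x p, (∀ v, a x v + ⟪DU v, p⟫ = 0) → ‖p‖ ≤ cp * ‖x‖

theorem isPressureBound_of_infSup {U Q : Type*} [NormedAddCommGroup U] [NormedSpace ℝ U]
    [NormedAddCommGroup Q] [InnerProductSpace ℝ Q] {a : U →ₗ[ℝ] U →ₗ[ℝ] ℝ} {DU : U →ₗ[ℝ] Q}
    {β Ca : ℝ} (hβ : 0 < β) (hCa : 0 ≤ Ca) (hbound : ∀ u v, |a u v| ≤ Ca * ‖u‖ * ‖v‖)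
    (hinf : ∀ q : Q, β * ‖q‖ ≤ ⨆ v : {v : U // v ≠ 0}, ⟪DU (v : U), q⟫ / ‖(v : U)‖) :
    IsPressureBound a DU (Ca / β) := by
  intro x p h
  rw [div_mul_eq_mul_div]
  refine norm_le_div_of_infSup hβ (by positivity) (hinf p) fun v => ?_
  linarith [h v, hbound x v, neg_abs_le (a x v)]

-- `cp` is the constant of `IsPressureBound`, `C_a / β_S` in the theorem.
noncomputable def biotDisplacementConst (γa Ca cp : ℝ) : ℝ := 2 * cp / γa + √((Ca + 2) / γa)

noncomputable def biotFluxConst (γa Ca cp : ℝ) : ℝ :=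
  Ca + 2 + 2 * cp * biotDisplacementConst γa Ca cp

noncomputable def biotIncrementConst (γa Ca cp : ℝ) : ℝ :=
  √((1 + 2 * √(biotFluxConst γa Ca cp) + cp ^ 2 / γa) / γa)

noncomputable def biotErrorConst (γa Ca Cb cp : ℝ) : ℝ :=
  (1 + cp) * biotDisplacementConst γa Ca cp + √(biotFluxConst γa Ca cp) + 1
    + (Cb + cp) * biotIncrementConst γa Ca cp

theorem biotErrorConst_pos {γa Ca Cb cp : ℝ} (hγa : 0 < γa) (hCb : 0 ≤ Cb) (hcp : 0 ≤ cp) :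
    0 < biotErrorConst γa Ca Cb cp := by
  unfold biotErrorConst biotDisplacementConst biotIncrementConst
  positivity

section DataBound

variable {U W Q : Type*} [NormedAddCommGroup U] [NormedAddCommGroup W] [NormedAddCommGroup Q]

structure IsBiotDataBound (τ κ c₀ : ℝ) (N : ℕ) (eu : ℕ → U) (ez : ℕ → W) (ep : ℕ → Q)
    (ρz : ℕ → W) (R : ℕ → Q) (S : ℝ) : Prop where
  displacement : ‖eu 0‖ ≤ S
  pressure : c₀ * ‖ep 0‖ ^ 2 ≤ S ^ 2
  flux : τ / κ * ‖ez 0‖ ^ 2 ≤ S ^ 2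
  source : ∑ j ∈ Icc 1 N, τ / κ * ‖ρz j‖ ^ 2 ≤ S ^ 2
  source_sub : ∑ j ∈ Icc 1 N, √(τ / κ) * ‖ρz j - ρz (j - 1)‖ ≤ S
  residual : ∑ j ∈ Icc 1 N, τ * ‖R j‖ ≤ S

noncomputable def biotData (τ κ c₀ : ℝ) (N : ℕ) (eu : ℕ → U) (ez : ℕ → W) (ep : ℕ → Q)
    (ρz : ℕ → W) (R : ℕ → Q) : ℝ :=
  ‖eu 0‖ + √c₀ * ‖ep 0‖ + √(τ / κ) * ‖ez 0‖ + √(∑ j ∈ Icc 1 N, τ / κ * ‖ρz j‖ ^ 2)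
    + √τ * ∑ j ∈ Icc 1 N, (√κ)⁻¹ * ‖ρz j - ρz (j - 1)‖ + ∑ j ∈ Icc 1 N, τ * ‖R j‖

theorem isBiotDataBound_biotData {τ κ c₀ : ℝ} {N : ℕ} {eu : ℕ → U} {ez : ℕ → W} {ep : ℕ → Q}
    {ρz : ℕ → W} {R : ℕ → Q} (hτ : 0 ≤ τ) (hκ : 0 ≤ κ) (hc₀ : 0 ≤ c₀) :
    IsBiotDataBound τ κ c₀ N eu ez ep ρz R (biotData τ κ c₀ N eu ez ep ρz R) := by
  set S := biotData τ κ c₀ N eu ez ep ρz R with hS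
  unfold biotData at hS
  have hρ : 0 ≤ ∑ j ∈ Icc 1 N, τ / κ * ‖ρz j‖ ^ 2 := sum_nonneg fun _ _ => by positivity
  have hδρ : √τ * ∑ j ∈ Icc 1 N, (√κ)⁻¹ * ‖ρz j - ρz (j - 1)‖
      = ∑ j ∈ Icc 1 N, √(τ / κ) * ‖ρz j - ρz (j - 1)‖ := by
    rw [mul_sum]
    exact sum_congr rfl fun j _ => by rw [Real.sqrt_div' _ hκ, div_eq_mul_inv, mul_assoc]
  have hδρ0 : 0 ≤ ∑ j ∈ Icc 1 N, √(τ / κ) * ‖ρz j - ρz (j - 1)‖ :=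
    sum_nonneg fun _ _ => by positivity
  have hR : 0 ≤ ∑ j ∈ Icc 1 N, τ * ‖R j‖ := sum_nonneg fun _ _ => by positivity
  have h₁ : 0 ≤ √c₀ * ‖ep 0‖ := by positivity
  have h₂ : 0 ≤ √(τ / κ) * ‖ez 0‖ := by positivity
  have h₃ : 0 ≤ √(∑ j ∈ Icc 1 N, τ / κ * ‖ρz j‖ ^ 2) := Real.sqrt_nonneg _
  have h₀ := norm_nonneg (eu 0)
  refine ⟨by linarith, ?_, ?_, ?_, by linarith, by linarith⟩
  · calc c₀ * ‖ep 0‖ ^ 2 = (√c₀ * ‖ep 0‖) ^ 2 := by rw [mul_pow, Real.sq_sqrt hc₀]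
      _ ≤ S ^ 2 := pow_le_pow_left₀ h₁ (by linarith) 2
  · calc τ / κ * ‖ez 0‖ ^ 2 = (√(τ / κ) * ‖ez 0‖) ^ 2 := by
          rw [mul_pow, Real.sq_sqrt (by positivity)]
      _ ≤ S ^ 2 := pow_le_pow_left₀ h₂ (by linarith) 2
  · calc ∑ j ∈ Icc 1 N, τ / κ * ‖ρz j‖ ^ 2 = √(∑ j ∈ Icc 1 N, τ / κ * ‖ρz j‖ ^ 2) ^ 2 :=
          (Real.sq_sqrt hρ).symm
      _ ≤ S ^ 2 := pow_le_pow_left₀ h₃ (by linarith) 2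

end DataBound

section Biot

variable {U W Q : Type*} [NormedAddCommGroup U] [InnerProductSpace ℝ U]
  [NormedAddCommGroup W] [InnerProductSpace ℝ W] [NormedAddCommGroup Q] [InnerProductSpace ℝ Q]

structure IsBiotErrorSystem (a : U →ₗ[ℝ] U →ₗ[ℝ] ℝ) (DU : U →ₗ[ℝ] Q) (DW : W →ₗ[ℝ] Q)
    (τ κ c₀ : ℝ) (N : ℕ) (eu : ℕ → U) (ez : ℕ → W) (ep : ℕ → Q) (ρz : ℕ → W) (R : ℕ → Q) :
    Prop where
  elasticity : ∀ m ≤ N, ∀ v : U, a (eu m) v + ⟪DU v, ep m⟫ = 0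
  darcy : ∀ m ≤ N, ∀ w : W, κ⁻¹ * ⟪ez m, w⟫ + ⟪DW w, ep m⟫ = κ⁻¹ * ⟪ρz m, w⟫
  mass : ∀ m, 1 ≤ m → m ≤ N → ∀ q : Q,
    ⟪DU (τ⁻¹ • (eu m - eu (m - 1))), q⟫ + ⟪DW (ez m), q⟫
      - c₀ * ⟪τ⁻¹ • (ep m - ep (m - 1)), q⟫ = ⟪R m, q⟫

namespace IsBiotErrorSystem

variable {a : U →ₗ[ℝ] U →ₗ[ℝ] ℝ} {DU : U →ₗ[ℝ] Q} {DW : W →ₗ[ℝ] Q} {τ κ c₀ : ℝ} {N n : ℕ}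
  {eu : ℕ → U} {ez : ℕ → W} {ep : ℕ → Q} {ρz : ℕ → W} {R : ℕ → Q}

theorem mass_mul (h : IsBiotErrorSystem a DU DW τ κ c₀ N eu ez ep ρz R) (hτ : τ ≠ 0)
    (hn : 1 ≤ n) (hnN : n ≤ N) (q : Q) :
    ⟪DU (eu n - eu (n - 1)), q⟫ + τ * ⟪DW (ez n), q⟫ - c₀ * ⟪ep n - ep (n - 1), q⟫
      = τ * ⟪R n, q⟫ := by
  have H := h.mass n hn hnN q
  rw [map_smul, real_inner_smul_left, real_inner_smul_left] at H
  field_simp at H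
  linear_combination H

theorem elasticity_sub (h : IsBiotErrorSystem a DU DW τ κ c₀ N eu ez ep ρz R) (hnN : n ≤ N)
    (v : U) : a (eu n - eu (n - 1)) v + ⟪DU v, ep n - ep (n - 1)⟫ = 0 := by
  rw [map_sub, LinearMap.sub_apply, inner_sub_right]
  linear_combination h.elasticity n hnN v - h.elasticity (n - 1) (by omega) v

theorem darcy_sub (h : IsBiotErrorSystem a DU DW τ κ c₀ N eu ez ep ρz R) (hnN : n ≤ N)
    (w : W) : κ⁻¹ * ⟪ez n - ez (n - 1), w⟫ + ⟪DW w, ep n - ep (n - 1)⟫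
      = κ⁻¹ * ⟪ρz n - ρz (n - 1), w⟫ := by
  rw [inner_sub_left, inner_sub_left, inner_sub_right]
  linear_combination h.darcy n hnN w - h.darcy (n - 1) (by omega) w

theorem energy_eq (h : IsBiotErrorSystem a DU DW τ κ c₀ N eu ez ep ρz R) (hτ : τ ≠ 0)
    (hn : 1 ≤ n) (hnN : n ≤ N) :
    a (eu n) (eu n - eu (n - 1)) + c₀ * ⟪ep n - ep (n - 1), ep n⟫ + τ / κ * ‖ez n‖ ^ 2
      = τ / κ * ⟪ρz n, ez n⟫ - τ * ⟪R n, ep n⟫ := by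
  have hz := h.darcy n hnN (ez n)
  rw [real_inner_self_eq_norm_sq] at hz
  linear_combination h.elasticity n hnN (eu n - eu (n - 1)) + τ * hz - h.mass_mul hτ hn hnN (ep n)

theorem energy_sub_eq (h : IsBiotErrorSystem a DU DW τ κ c₀ N eu ez ep ρz R) (hτ : τ ≠ 0)
    (hn : 1 ≤ n) (hnN : n ≤ N) :
    a (eu n - eu (n - 1)) (eu n - eu (n - 1)) + c₀ * ‖ep n - ep (n - 1)‖ ^ 2
        + τ / κ * ⟪ez n - ez (n - 1), ez n⟫
      = τ / κ * ⟪ρz n - ρz (n - 1), ez n⟫ - τ * ⟪R n, ep n - ep (n - 1)⟫ := by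
  have hp := h.mass_mul hτ hn hnN (ep n - ep (n - 1))
  rw [real_inner_self_eq_norm_sq] at hp
  linear_combination h.elasticity_sub hnN (eu n - eu (n - 1)) + τ * h.darcy_sub hnN (ez n) - hp

theorem energy_step (h : IsBiotErrorSystem a DU DW τ κ c₀ N eu ez ep ρz R)
    (hsym : ∀ u v, a u v = a v u) (hpos : ∀ v, 0 ≤ a v v) (hτ : 0 < τ) (hκ : 0 < κ)
    (hc₀ : 0 ≤ c₀) (hn : 1 ≤ n) (hnN : n ≤ N) :
    a (eu n) (eu n) + c₀ * ‖ep n‖ ^ 2 - (a (eu (n - 1)) (eu (n - 1)) + c₀ * ‖ep (n - 1)‖ ^ 2)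
        + τ / κ * ‖ez n‖ ^ 2
      ≤ τ / κ * ‖ρz n‖ ^ 2 + 2 * (τ * ‖R n‖ * ‖ep n‖) := by
  have hu := LinearMap.apply_self_sub_apply_self_le hsym hpos (eu n) (eu (n - 1))
  have hp := mul_le_mul_of_nonneg_left
    (norm_sq_sub_norm_sq_le_two_mul_inner (ep n) (ep (n - 1))) hc₀
  have hρz : ⟪ρz n, ez n⟫ ≤ ‖ρz n‖ ^ 2 / 2 + ‖ez n‖ ^ 2 / 2 := by
    nlinarith [real_inner_le_norm (ρz n) (ez n), sq_nonneg (‖ρz n‖ - ‖ez n‖)]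
  have hρ := mul_le_mul_of_nonneg_left hρz (div_nonneg hτ.le hκ.le)
  have hR : -(τ * ⟪R n, ep n⟫) ≤ τ * ‖R n‖ * ‖ep n‖ := by
    rw [neg_mul_eq_mul_neg, mul_assoc]
    exact mul_le_mul_of_nonneg_left
      ((neg_le_abs _).trans (abs_real_inner_le_norm _ _)) hτ.le
  linarith [h.energy_eq hτ.ne' hn hnN]

theorem energy_le (h : IsBiotErrorSystem a DU DW τ κ c₀ N eu ez ep ρz R)
    (hsym : ∀ u v, a u v = a v u) (hpos : ∀ v, 0 ≤ a v v) (hτ : 0 < τ) (hκ : 0 < κ)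
    (hc₀ : 0 ≤ c₀) (hnN : n ≤ N) :
    a (eu n) (eu n) + c₀ * ‖ep n‖ ^ 2 + ∑ j ∈ Icc 1 n, τ / κ * ‖ez j‖ ^ 2
      ≤ a (eu 0) (eu 0) + c₀ * ‖ep 0‖ ^ 2 + ∑ j ∈ Icc 1 n, τ / κ * ‖ρz j‖ ^ 2
        + 2 * ∑ j ∈ Icc 1 n, τ * ‖R j‖ * ‖ep j‖ := by
  have hsum := sum_le_sum fun j (hj : j ∈ Icc 1 n) =>
    h.energy_step hsym hpos hτ hκ hc₀ (mem_Icc.1 hj).1 ((mem_Icc.1 hj).2.trans hnN)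
  rw [sum_add_distrib, sum_add_distrib, ← mul_sum _ _ 2,
    sum_Icc_one_sub_pred (fun j => a (eu j) (eu j) + c₀ * ‖ep j‖ ^ 2)] at hsum
  linarith

theorem increment_step (h : IsBiotErrorSystem a DU DW τ κ c₀ N eu ez ep ρz R) {γa cp : ℝ}
    (hγa : 0 < γa) (hcoer : ∀ u, γa * ‖u‖ ^ 2 ≤ a u u)
    (hcp : IsPressureBound a DU cp)
    (hτ : 0 < τ) (hκ : 0 < κ) (hc₀ : 0 ≤ c₀) (hn : 1 ≤ n) (hnN : n ≤ N) :
    γa * ‖eu n - eu (n - 1)‖ ^ 2 + (τ / κ * ‖ez n‖ ^ 2 - τ / κ * ‖ez (n - 1)‖ ^ 2)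
      ≤ 2 * (τ / κ * ‖ρz n - ρz (n - 1)‖ * ‖ez n‖) + cp ^ 2 / γa * (τ * ‖R n‖) ^ 2 := by
  set δu := eu n - eu (n - 1)
  have hz := mul_le_mul_of_nonneg_left
    (norm_sq_sub_norm_sq_le_two_mul_inner (ez n) (ez (n - 1))) (div_nonneg hτ.le hκ.le)
  have hρ := mul_le_mul_of_nonneg_left (real_inner_le_norm (ρz n - ρz (n - 1)) (ez n))
    (div_nonneg hτ.le hκ.le)
  have hR : -(τ * ⟪R n, ep n - ep (n - 1)⟫) ≤ τ * ‖R n‖ * (cp * ‖δu‖) := by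
    rw [neg_mul_eq_mul_neg, mul_assoc]
    refine mul_le_mul_of_nonneg_left ((neg_le_abs _).trans ?_) hτ.le
    exact (abs_real_inner_le_norm _ _).trans
      (mul_le_mul_of_nonneg_left (hcp _ _ (h.elasticity_sub hnN)) (norm_nonneg _))
  -- Young's inequality absorbs the residual term into the coercivity term
  have hyoung : 2 * (τ * ‖R n‖ * (cp * ‖δu‖)) ≤ γa * ‖δu‖ ^ 2 + cp ^ 2 / γa * (τ * ‖R n‖) ^ 2 := by
    have := div_nonneg (sq_nonneg (γa * ‖δu‖ - cp * (τ * ‖R n‖))) hγa.le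
    rw [sub_sq, add_div, sub_div] at this
    field_simp at this ⊢
    linarith
  have := mul_nonneg hc₀ (sq_nonneg ‖ep n - ep (n - 1)‖)
  linarith [h.energy_sub_eq hτ.ne' hn hnN, hcoer δu]

theorem increment_le (h : IsBiotErrorSystem a DU DW τ κ c₀ N eu ez ep ρz R) {γa cp : ℝ}
    (hγa : 0 < γa) (hcoer : ∀ u, γa * ‖u‖ ^ 2 ≤ a u u)
    (hcp : IsPressureBound a DU cp)
    (hτ : 0 < τ) (hκ : 0 < κ) (hc₀ : 0 ≤ c₀) (hn : 1 ≤ n) (hnN : n ≤ N) :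
    γa * ‖eu n - eu (n - 1)‖ ^ 2
      ≤ τ / κ * ‖ez 0‖ ^ 2 + 2 * ∑ j ∈ Icc 1 n, τ / κ * ‖ρz j - ρz (j - 1)‖ * ‖ez j‖
        + cp ^ 2 / γa * ∑ j ∈ Icc 1 n, (τ * ‖R j‖) ^ 2 := by
  have hsum := sum_le_sum fun j (hj : j ∈ Icc 1 n) =>
    h.increment_step hγa hcoer hcp hτ hκ hc₀ (mem_Icc.1 hj).1 ((mem_Icc.1 hj).2.trans hnN)
  rw [sum_add_distrib, sum_add_distrib, ← mul_sum _ _ 2, ← mul_sum _ _ (cp ^ 2 / γa),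
    sum_Icc_one_sub_pred (fun j => τ / κ * ‖ez j‖ ^ 2)] at hsum
  have hlast : γa * ‖eu n - eu (n - 1)‖ ^ 2 ≤ ∑ j ∈ Icc 1 n, γa * ‖eu j - eu (j - 1)‖ ^ 2 :=
    single_le_sum (f := fun j => γa * ‖eu j - eu (j - 1)‖ ^ 2) (fun _ _ => by positivity)
      (mem_Icc.2 ⟨hn, le_rfl⟩)
  have : 0 ≤ τ / κ * ‖ez n‖ ^ 2 := by positivity
  linarith

theorem tau_mul_norm_DW_le (h : IsBiotErrorSystem a DU DW τ κ c₀ N eu ez ep ρz R) {Cb cp : ℝ}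
    (hDU : ∀ v, ‖DU v‖ ≤ Cb * ‖v‖)
    (hcp : IsPressureBound a DU cp)
    (hτ : 0 < τ) (hc₀ : 0 ≤ c₀) (hc₀1 : c₀ ≤ 1) (hn : 1 ≤ n) (hnN : n ≤ N) :
    τ * ‖DW (ez n)‖ ≤ τ * ‖R n‖ + (Cb + cp) * ‖eu n - eu (n - 1)‖ := by
  have hvec : τ • DW (ez n) = τ • R n - DU (eu n - eu (n - 1)) + c₀ • (ep n - ep (n - 1)) := by
    refine ext_inner_right ℝ fun q => ?_
    have hq := h.mass_mul hτ.ne' hn hnN q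
    simp only [inner_add_left, inner_sub_left, real_inner_smul_left] at hq ⊢
    linear_combination hq
  have hp : c₀ * ‖ep n - ep (n - 1)‖ ≤ cp * ‖eu n - eu (n - 1)‖ :=
    (mul_le_of_le_one_left (norm_nonneg _) hc₀1).trans (hcp _ _ (h.elasticity_sub hnN))
  calc τ * ‖DW (ez n)‖ = ‖τ • R n - DU (eu n - eu (n - 1)) + c₀ • (ep n - ep (n - 1))‖ := by
        rw [← hvec, norm_smul, Real.norm_of_nonneg hτ.le]
    _ ≤ ‖τ • R n‖ + ‖DU (eu n - eu (n - 1))‖ + ‖c₀ • (ep n - ep (n - 1))‖ :=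
        (norm_add_le _ _).trans (add_le_add_left (norm_sub_le _ _) _)
    _ ≤ τ * ‖R n‖ + (Cb + cp) * ‖eu n - eu (n - 1)‖ := by
        rw [norm_smul, norm_smul, Real.norm_of_nonneg hτ.le, Real.norm_of_nonneg hc₀]
        linarith [hDU (eu n - eu (n - 1))]

variable {γa Ca Cb cp S : ℝ}

theorem energy_le_of_dataBound (h : IsBiotErrorSystem a DU DW τ κ c₀ N eu ez ep ρz R)
    (hS : IsBiotDataBound τ κ c₀ N eu ez ep ρz R S) (hsym : ∀ u v, a u v = a v u)
    (hγa : 0 ≤ γa) (hcoer : ∀ u, γa * ‖u‖ ^ 2 ≤ a u u) (hbound : ∀ u v, |a u v| ≤ Ca * ‖u‖ * ‖v‖)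
    (hCa : 0 ≤ Ca) (hcp0 : 0 ≤ cp) (hcp : IsPressureBound a DU cp)
    (hτ : 0 < τ) (hκ : 0 < κ) (hc₀ : 0 ≤ c₀) {X : ℝ} (hX : ∀ j ≤ N, ‖eu j‖ ≤ X) (hnN : n ≤ N) :
    γa * ‖eu n‖ ^ 2 + ∑ j ∈ Icc 1 n, τ / κ * ‖ez j‖ ^ 2 ≤ (Ca + 2) * S ^ 2 + 2 * cp * S * X := by
  have hsub : Icc 1 n ⊆ Icc 1 N := Icc_subset_Icc_right hnN
  have hE := h.energy_le hsym (fun v => (by positivity : 0 ≤ γa * ‖v‖ ^ 2).trans (hcoer v))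
    hτ hκ hc₀ hnN
  have hu₀ : a (eu 0) (eu 0) ≤ Ca * S ^ 2 := by
    have := mul_le_mul_of_nonneg_left (pow_le_pow_left₀ (norm_nonneg _) hS.displacement 2) hCa
    linarith [le_abs_self (a (eu 0) (eu 0)), hbound (eu 0) (eu 0)]
  have hρ : ∑ j ∈ Icc 1 n, τ / κ * ‖ρz j‖ ^ 2 ≤ S ^ 2 :=
    (sum_le_sum_of_subset_of_nonneg hsub fun _ _ _ => by positivity).trans hS.source
  have hR : ∑ j ∈ Icc 1 n, τ * ‖R j‖ * ‖ep j‖ ≤ S * (cp * X) :=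
    calc ∑ j ∈ Icc 1 n, τ * ‖R j‖ * ‖ep j‖ ≤ ∑ j ∈ Icc 1 n, τ * ‖R j‖ * (cp * X) := by
          refine sum_le_sum fun j hj => mul_le_mul_of_nonneg_left ?_ (by positivity)
          have hjN : j ≤ N := (mem_Icc.1 hj).2.trans hnN
          exact (hcp _ _ (h.elasticity j hjN)).trans (mul_le_mul_of_nonneg_left (hX j hjN) hcp0)
      _ = (∑ j ∈ Icc 1 n, τ * ‖R j‖) * (cp * X) := (sum_mul _ _ _).symm
      _ ≤ S * (cp * X) := by
          refine mul_le_mul_of_nonneg_right ?_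
            (mul_nonneg hcp0 ((norm_nonneg _).trans (hX 0 (Nat.zero_le N))))
          exact (sum_le_sum_of_subset_of_nonneg hsub fun _ _ _ => by positivity).trans hS.residual
  linarith [hcoer (eu n), mul_nonneg hc₀ (sq_nonneg ‖ep n‖), hS.pressure]

theorem norm_eu_le (h : IsBiotErrorSystem a DU DW τ κ c₀ N eu ez ep ρz R)
    (hS : IsBiotDataBound τ κ c₀ N eu ez ep ρz R S) (hsym : ∀ u v, a u v = a v u)
    (hγa : 0 < γa) (hcoer : ∀ u, γa * ‖u‖ ^ 2 ≤ a u u) (hbound : ∀ u v, |a u v| ≤ Ca * ‖u‖ * ‖v‖)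
    (hCa : 0 ≤ Ca) (hcp0 : 0 ≤ cp) (hcp : IsPressureBound a DU cp)
    (hτ : 0 < τ) (hκ : 0 < κ) (hc₀ : 0 ≤ c₀) (hnN : n ≤ N) :
    ‖eu n‖ ≤ biotDisplacementConst γa Ca cp * S := by
  obtain ⟨n₀, hn₀, hmax⟩ := exists_max_image (range (N + 1)) (fun j => ‖eu j‖) ⟨0, by simp⟩
  have hX : ∀ j ≤ N, ‖eu j‖ ≤ ‖eu n₀‖ := fun j hj => hmax j (mem_range.2 (by omega))
  have hE := h.energy_le_of_dataBound hS hsym hγa.le hcoer hbound hCa hcp0 hcp hτ hκ hc₀ hX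
    (Nat.lt_succ_iff.1 (mem_range.1 hn₀))
  have : 0 ≤ ∑ j ∈ Icc 1 n₀, τ / κ * ‖ez j‖ ^ 2 := sum_nonneg fun _ _ => by positivity
  exact (hX n hnN).trans (le_mul_of_sq_le_add hγa (by linarith) (by positivity)
    ((norm_nonneg _).trans hS.displacement) (by linarith))

theorem flux_le (h : IsBiotErrorSystem a DU DW τ κ c₀ N eu ez ep ρz R)
    (hS : IsBiotDataBound τ κ c₀ N eu ez ep ρz R S) (hsym : ∀ u v, a u v = a v u)
    (hγa : 0 < γa) (hcoer : ∀ u, γa * ‖u‖ ^ 2 ≤ a u u) (hbound : ∀ u v, |a u v| ≤ Ca * ‖u‖ * ‖v‖)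
    (hCa : 0 ≤ Ca) (hcp0 : 0 ≤ cp) (hcp : IsPressureBound a DU cp)
    (hτ : 0 < τ) (hκ : 0 < κ) (hc₀ : 0 ≤ c₀) (hn : 1 ≤ n) (hnN : n ≤ N) :
    √(τ / κ) * ‖ez n‖ ≤ √(biotFluxConst γa Ca cp) * S := by
  have hE := h.energy_le_of_dataBound hS hsym hγa.le hcoer hbound hCa hcp0 hcp hτ hκ hc₀
    (fun j hj => h.norm_eu_le hS hsym hγa hcoer hbound hCa hcp0 hcp hτ hκ hc₀ hj) hnN
  have hlast : τ / κ * ‖ez n‖ ^ 2 ≤ ∑ j ∈ Icc 1 n, τ / κ * ‖ez j‖ ^ 2 :=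
    single_le_sum (f := fun j => τ / κ * ‖ez j‖ ^ 2) (fun _ _ => by positivity)
      (mem_Icc.2 ⟨hn, le_rfl⟩)
  refine le_sqrt_mul_of_sq_le ((norm_nonneg _).trans hS.displacement) (by positivity) ?_
  rw [mul_pow, Real.sq_sqrt (by positivity), biotFluxConst]
  linarith [mul_nonneg hγa.le (sq_nonneg ‖eu n‖)]

theorem norm_eu_sub_le (h : IsBiotErrorSystem a DU DW τ κ c₀ N eu ez ep ρz R)
    (hS : IsBiotDataBound τ κ c₀ N eu ez ep ρz R S) (hsym : ∀ u v, a u v = a v u)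
    (hγa : 0 < γa) (hcoer : ∀ u, γa * ‖u‖ ^ 2 ≤ a u u) (hbound : ∀ u v, |a u v| ≤ Ca * ‖u‖ * ‖v‖)
    (hCa : 0 ≤ Ca) (hcp0 : 0 ≤ cp) (hcp : IsPressureBound a DU cp)
    (hτ : 0 < τ) (hκ : 0 < κ) (hc₀ : 0 ≤ c₀) (hn : 1 ≤ n) (hnN : n ≤ N) :
    ‖eu n - eu (n - 1)‖ ≤ biotIncrementConst γa Ca cp * S := by
  have hS0 : 0 ≤ S := (norm_nonneg _).trans hS.displacement
  have hsub : Icc 1 n ⊆ Icc 1 N := Icc_subset_Icc_right hnN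
  set K := √(biotFluxConst γa Ca cp)
  have hsq : √(τ / κ) * √(τ / κ) = τ / κ := Real.mul_self_sqrt (by positivity)
  have hρ : ∑ j ∈ Icc 1 n, τ / κ * ‖ρz j - ρz (j - 1)‖ * ‖ez j‖ ≤ S * (K * S) :=
    calc ∑ j ∈ Icc 1 n, τ / κ * ‖ρz j - ρz (j - 1)‖ * ‖ez j‖
        = ∑ j ∈ Icc 1 n, √(τ / κ) * ‖ρz j - ρz (j - 1)‖ * (√(τ / κ) * ‖ez j‖) :=
          sum_congr rfl fun j _ => by linear_combination (-(‖ρz j - ρz (j - 1)‖ * ‖ez j‖)) * hsq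
      _ ≤ ∑ j ∈ Icc 1 n, √(τ / κ) * ‖ρz j - ρz (j - 1)‖ * (K * S) := by
          refine sum_le_sum fun j hj => mul_le_mul_of_nonneg_left ?_ (by positivity)
          exact h.flux_le hS hsym hγa hcoer hbound hCa hcp0 hcp hτ hκ hc₀ (mem_Icc.1 hj).1
            ((mem_Icc.1 hj).2.trans hnN)
      _ = (∑ j ∈ Icc 1 n, √(τ / κ) * ‖ρz j - ρz (j - 1)‖) * (K * S) := (sum_mul _ _ _).symm
      _ ≤ S * (K * S) := by
          refine mul_le_mul_of_nonneg_right ?_ (by positivity)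
          exact (sum_le_sum_of_subset_of_nonneg hsub fun _ _ _ => by positivity).trans
            hS.source_sub
  have hR : ∑ j ∈ Icc 1 n, (τ * ‖R j‖) ^ 2 ≤ S ^ 2 :=
    (sum_le_sum_of_subset_of_nonneg hsub fun _ _ _ => by positivity).trans
      ((sum_sq_le_sq_sum_of_nonneg fun _ _ => by positivity).trans
        (pow_le_pow_left₀ (sum_nonneg fun _ _ => by positivity) hS.residual 2))
  have hI := h.increment_le hγa hcoer hcp hτ hκ hc₀ hn hnN
  refine le_sqrt_mul_of_sq_le hS0 (norm_nonneg _) ?_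
  rw [div_mul_eq_mul_div, le_div_iff₀ hγa]
  linarith [hS.flux, mul_le_mul_of_nonneg_left hR (div_nonneg (sq_nonneg cp) hγa.le)]

theorem error_le (h : IsBiotErrorSystem a DU DW τ κ c₀ N eu ez ep ρz R)
    (hS : IsBiotDataBound τ κ c₀ N eu ez ep ρz R S) (hsym : ∀ u v, a u v = a v u)
    (hγa : 0 < γa) (hcoer : ∀ u, γa * ‖u‖ ^ 2 ≤ a u u) (hbound : ∀ u v, |a u v| ≤ Ca * ‖u‖ * ‖v‖)
    (hCa : 0 ≤ Ca) (hDU : ∀ v, ‖DU v‖ ≤ Cb * ‖v‖) (hCb : 0 ≤ Cb) (hcp0 : 0 ≤ cp)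
    (hcp : IsPressureBound a DU cp)
    (hτ : 0 < τ) (hκ : 0 < κ) (hc₀ : 0 ≤ c₀) (hc₀1 : c₀ ≤ 1) (hn : 1 ≤ n) (hnN : n ≤ N) :
    ‖eu n‖ + ‖ep n‖ + √(τ / κ * ‖ez n‖ ^ 2 + τ ^ 2 * ‖DW (ez n)‖ ^ 2)
      ≤ biotErrorConst γa Ca Cb cp * S := by
  have hu := h.norm_eu_le hS hsym hγa hcoer hbound hCa hcp0 hcp hτ hκ hc₀ hnN
  have hp := (hcp _ _ (h.elasticity n hnN)).trans (mul_le_mul_of_nonneg_left hu hcp0)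
  have hz := h.flux_le hS hsym hγa hcoer hbound hCa hcp0 hcp hτ hκ hc₀ hn hnN
  have hδ := mul_le_mul_of_nonneg_left
    (h.norm_eu_sub_le hS hsym hγa hcoer hbound hCa hcp0 hcp hτ hκ hc₀ hn hnN) (add_nonneg hCb hcp0)
  have hDW := h.tau_mul_norm_DW_le hDU hcp hτ hc₀ hc₀1 hn hnN
  have hR : τ * ‖R n‖ ≤ S :=
    (single_le_sum (f := fun j => τ * ‖R j‖) (fun _ _ => by positivity)
      (mem_Icc.2 ⟨hn, hnN⟩)).trans hS.residual
  have hsqrt : √(τ / κ * ‖ez n‖ ^ 2 + τ ^ 2 * ‖DW (ez n)‖ ^ 2)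
      ≤ √(τ / κ) * ‖ez n‖ + τ * ‖DW (ez n)‖ := by
    rw [Real.sqrt_le_left (by positivity), add_sq, mul_pow, mul_pow, Real.sq_sqrt (by positivity)]
    have : 0 ≤ √(τ / κ) * ‖ez n‖ * (τ * ‖DW (ez n)‖) := by positivity
    linarith
  rw [biotErrorConst]
  linarith

end IsBiotErrorSystem

end Biot

theorem biot_full_error_estimate_general {U W Q : Type*}
    [NormedAddCommGroup U] [InnerProductSpace ℝ U]
    [NormedAddCommGroup W] [InnerProductSpace ℝ W]
    [NormedAddCommGroup Q] [InnerProductSpace ℝ Q]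
    (γa Ca Cb βS : ℝ) (hγa : 0 < γa) (hCa : 0 < Ca) (hCb : 0 < Cb) (hβS : 0 < βS) :
    ∃ C : ℝ, 0 < C ∧
      ∀ (τ κ c₀ : ℝ), 0 < τ → 0 < κ → κ ≤ 1 → 0 ≤ c₀ → c₀ < 1 →
      ∀ (a : U →ₗ[ℝ] U →ₗ[ℝ] ℝ) (DU : U →ₗ[ℝ] Q) (DW : W →ₗ[ℝ] Q),
        (∀ u v : U, a u v = a v u) →
        (∀ u : U, γa * ‖u‖ ^ 2 ≤ a u u) →
        (∀ u v : U, |a u v| ≤ Ca * ‖u‖ * ‖v‖) →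
        (∀ v : U, ‖DU v‖ ≤ Cb * ‖v‖) →
        (∀ q : Q, βS * ‖q‖ ≤ ⨆ v : {v : U // v ≠ 0}, ⟪DU (v : U), q⟫ / ‖(v : U)‖) →
      ∀ (N : ℕ), 1 ≤ N →
      ∀ (eu : ℕ → U) (ez : ℕ → W) (ep : ℕ → Q) (ρz : ℕ → W) (R : ℕ → Q),
        (∀ m ≤ N, ∀ v : U, a (eu m) v + ⟪DU v, ep m⟫ = 0) →
        (∀ m ≤ N, ∀ w : W, κ⁻¹ * ⟪ez m, w⟫ + ⟪DW w, ep m⟫ = κ⁻¹ * ⟪ρz m, w⟫) →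
        (∀ m, 1 ≤ m → m ≤ N → ∀ q : Q,
          ⟪DU (τ⁻¹ • (eu m - eu (m - 1))), q⟫ + ⟪DW (ez m), q⟫
            - c₀ * ⟪τ⁻¹ • (ep m - ep (m - 1)), q⟫ = ⟪R m, q⟫) →
      ∀ m, 1 ≤ m → m ≤ N →
        ‖eu m‖ + ‖ep m‖
            + Real.sqrt ((τ / κ) * ‖ez m‖ ^ 2 + τ ^ 2 * ‖DW (ez m)‖ ^ 2) ≤
          C * (‖eu 0‖ + Real.sqrt c₀ * ‖ep 0‖ + Real.sqrt (τ / κ) * ‖ez 0‖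
            + Real.sqrt (∑ j ∈ Icc 1 N, (τ / κ) * ‖ρz j‖ ^ 2)
            + Real.sqrt τ * ∑ j ∈ Icc 1 N, (Real.sqrt κ)⁻¹ * ‖ρz j - ρz (j - 1)‖
            + ∑ j ∈ Icc 1 N, τ * ‖R j‖) := by
  have hcp : 0 ≤ Ca / βS := by positivity
  refine ⟨biotErrorConst γa Ca Cb (Ca / βS), biotErrorConst_pos hγa hCb.le hcp, ?_⟩
  intro τ κ c₀ hτ hκ _ hc₀ hc₀1 a DU DW hsym hcoer hbound hDU hinf N _ eu ez ep ρz R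
    helast hdarcy hmass m hm hmN
  exact IsBiotErrorSystem.error_le ⟨helast, hdarcy, hmass⟩
    (isBiotDataBound_biotData hτ.le hκ.le hc₀) hsym hγa hcoer hbound hCa.le hDU hCb.le hcp
    (isPressureBound_of_infSup hβS hCa.le hbound hinf) hτ hκ hc₀ hc₀1.le hm hmN

/-- Full discrete a priori error estimate (summed form of Proposition 5.2) for minimally
Stokes–Biot stable Euler–Galerkin schemes: there is `C > 0` depending only on
`γ_a, C_a, C_b, β_S` (independent of `κ, c₀, τ, N`) such that for `1 ≤ m ≤ N`,
`‖e_u^m‖_U + ‖e_p^m‖_Q + |||e_z^m||| ≤ C(‖e_u^0‖ + c₀^{1/2}‖e_p^0‖ + (τ/κ)^{1/2}‖e_z^0‖ +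
(Σ_j (τ/κ)‖ρ_z^j‖²)^{1/2} + τ^{1/2}Σ_j κ^{−1/2}‖ρ_z^j − ρ_z^{j−1}‖ + Σ_j τ‖R^j‖)`,
with `|||z|||² = (τ/κ)‖z‖² + τ²‖D_W z‖²`. -/
theorem biot_full_error_estimate {U W Q : Type*}
    [NormedAddCommGroup U] [InnerProductSpace ℝ U] [FiniteDimensional ℝ U]
    [NormedAddCommGroup W] [InnerProductSpace ℝ W] [FiniteDimensional ℝ W]
    [NormedAddCommGroup Q] [InnerProductSpace ℝ Q] [FiniteDimensional ℝ Q]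
    (γa Ca Cb βS : ℝ) (hγa : 0 < γa) (hCa : 0 < Ca) (hCb : 0 < Cb) (hβS : 0 < βS) :
    ∃ C : ℝ, 0 < C ∧
      ∀ (τ κ c₀ : ℝ), 0 < τ → 0 < κ → κ ≤ 1 → 0 ≤ c₀ → c₀ < 1 →
      ∀ (a : U →ₗ[ℝ] U →ₗ[ℝ] ℝ) (DU : U →ₗ[ℝ] Q) (DW : W →ₗ[ℝ] Q),
        (∀ u v : U, a u v = a v u) →
        (∀ u : U, γa * ‖u‖ ^ 2 ≤ a u u) →
        (∀ u v : U, |a u v| ≤ Ca * ‖u‖ * ‖v‖) →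
        (∀ v : U, ‖DU v‖ ≤ Cb * ‖v‖) →
        (∀ q : Q, βS * ‖q‖ ≤ ⨆ v : {v : U // v ≠ 0}, ⟪DU (v : U), q⟫ / ‖(v : U)‖) →
      ∀ (N : ℕ), 1 ≤ N →
      ∀ (eu : ℕ → U) (ez : ℕ → W) (ep : ℕ → Q) (ρz : ℕ → W) (R : ℕ → Q),
        (∀ m ≤ N, ∀ v : U, a (eu m) v + ⟪DU v, ep m⟫ = 0) →
        (∀ m ≤ N, ∀ w : W, κ⁻¹ * ⟪ez m, w⟫ + ⟪DW w, ep m⟫ = κ⁻¹ * ⟪ρz m, w⟫) →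
        (∀ m, 1 ≤ m → m ≤ N → ∀ q : Q,
          ⟪DU (τ⁻¹ • (eu m - eu (m - 1))), q⟫ + ⟪DW (ez m), q⟫
            - c₀ * ⟪τ⁻¹ • (ep m - ep (m - 1)), q⟫ = ⟪R m, q⟫) →
      ∀ m, 1 ≤ m → m ≤ N →
        ‖eu m‖ + ‖ep m‖
            + Real.sqrt ((τ / κ) * ‖ez m‖ ^ 2 + τ ^ 2 * ‖DW (ez m)‖ ^ 2) ≤
          C * (‖eu 0‖ + Real.sqrt c₀ * ‖ep 0‖ + Real.sqrt (τ / κ) * ‖ez 0‖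
            + Real.sqrt (∑ j ∈ Icc 1 N, (τ / κ) * ‖ρz j‖ ^ 2)
            + Real.sqrt τ * ∑ j ∈ Icc 1 N, (Real.sqrt κ)⁻¹ * ‖ρz j - ρz (j - 1)‖
            + ∑ j ∈ Icc 1 N, τ * ‖R j‖) :=
  biot_full_error_estimate_general γa Ca Cb βS hγa hCa hCb hβS
end
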